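/- Let g : ℝ → ℝ be C¹ with 0 ≤ g'(s) ≤ Λ₁ − ε for all s (for some ε > 0), and let G be an antiderivative of g. Let H be a real Hilbert space of functions, T a symmetric positive operator with Λ₁⟨Tρ, Tρ⟩ ≤ ⟨ρ, Tρ⟩ for all ρ (abstracting the spectral gap inequality Λ₁∫(Tρ)² ≤ ∫ρ·Tρ). Suppose ω = g(ψ) pointwise and ψ = Tω + h for fixed h. If ρ ≠ 0 satisfies ∫ Ĝ(ω + ρ) = ∫ Ĝ(ω) (where Ĝ is the Legendre transform of G), then −(1/2)∫ρ·Tρ − ∫ψ·ρ ≥ (ε/2)∫(Tρ)² > 0. -/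

import Mathlib

/-!
Pointwise, with `p = ψ`, `r = ρ`, `σ = Tρ`: Fenchel–Young at `ω + ρ` with the test point
`ψ + Tρ`, Fenchel equality at `ω = g ψ`, and the Taylor bound
`G (ψ + Tρ) ≤ G ψ + ω Tρ + ((Λ₁ - ε) / 2) (Tρ)²` give
`ψ ρ + ρ Tρ - ((Λ₁ - ε) / 2) (Tρ)² ≤ Ĝ (ω + ρ) - Ĝ ω`. Integrating, the right side vanishes,
and the spectral gap `Λ₁ ∫ (Tρ)² ≤ ∫ ρ Tρ` turns the left side into the claimed bound.
Positivity of `T` forces `Tρ ≠ 0`, hence `∫ (Tρ)² > 0`.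
-/

open MeasureTheory

lemma add_mul_sub_le_of_hasDerivAt_of_monotone {f f' : ℝ → ℝ}
    (hf : ∀ x, HasDerivAt f (f' x) x) (hf' : Monotone f') (a x : ℝ) :
    f a + f' a * (x - a) ≤ f x := by
  have hderiv : deriv f = f' := funext fun y => (hf y).deriv
  have hconv : ConvexOn ℝ Set.univ f :=
    Monotone.convexOn_univ_of_deriv (fun y => (hf y).differentiableAt) (hderiv ▸ hf')
  rcases lt_trichotomy a x with hax | rfl | hxa
  · have := hconv.le_slope_of_hasDerivAt trivial trivial hax (hf a)
    rw [slope_def_field, le_div_iff₀ (sub_pos.2 hax)] at this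
    linarith
  · simp
  · have := hconv.slope_le_of_hasDerivAt trivial trivial hxa (hf a)
    rw [slope_def_field, div_le_iff₀ (sub_pos.2 hxa)] at this
    linarith

lemma monotone_mul_sub_of_deriv_le {g : ℝ → ℝ} {L : ℝ} (hg : Differentiable ℝ g)
    (hgL : ∀ s, deriv g s ≤ L) : Monotone fun s => L * s - g s :=
  monotone_of_deriv_nonneg (by fun_prop) fun s => by
    rw [(((hasDerivAt_id' s).const_mul L).fun_sub (hg s).hasDerivAt).deriv]
    linarith [hgL s]

section Legendre

variable {g G Ghat : ℝ → ℝ}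

lemma legendre_apply_eq_of_hasDerivAt (hG : ∀ s, HasDerivAt G (g s) s) (hg : Monotone g)
    {p c : ℝ} (hc : IsLUB {y : ℝ | ∃ τ : ℝ, y = g p * τ - G τ} c) :
    c = g p * p - G p := by
  refine le_antisymm (hc.2 ?_) (hc.1 ⟨p, rfl⟩)
  rintro y ⟨τ, rfl⟩
  linarith [add_mul_sub_le_of_hasDerivAt_of_monotone hG hg p τ]

/-- Taylor bound: `L s² / 2 - G s` is convex, so it lies above its tangent at `p`. -/
lemma le_add_mul_add_sq_of_hasDerivAt (hG : ∀ s, HasDerivAt G (g s) s) {L : ℝ}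
    (hgL : Monotone fun s => L * s - g s) (p σ : ℝ) :
    G (p + σ) ≤ G p + g p * σ + L / 2 * σ ^ 2 := by
  have hderiv : ∀ s, HasDerivAt (fun s => L / 2 * s ^ 2 - G s) (L * s - g s) s :=
    fun s => (((hasDerivAt_pow 2 s).const_mul (L / 2)).fun_sub (hG s)).congr_deriv (by ring)
  have := add_mul_sub_le_of_hasDerivAt_of_monotone hderiv hgL p (p + σ)
  linarith

lemma mul_add_mul_sub_sq_le_legendre_sub_legendre (hG : ∀ s, HasDerivAt G (g s) s)
    (hGhat : ∀ s, IsLUB {y : ℝ | ∃ τ : ℝ, y = s * τ - G τ} (Ghat s)) (hg : Monotone g) {L : ℝ}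
    (hgL : Monotone fun s => L * s - g s) (p r σ : ℝ) :
    p * r + r * σ - L / 2 * σ ^ 2 ≤ Ghat (g p + r) - Ghat (g p) := by
  have fenchel_young : (g p + r) * (p + σ) - G (p + σ) ≤ Ghat (g p + r) :=
    (hGhat (g p + r)).1 ⟨p + σ, rfl⟩
  have fenchel_eq := legendre_apply_eq_of_hasDerivAt hG hg (hGhat (g p))
  have taylor := le_add_mul_add_sq_of_hasDerivAt hG hgL p σ
  linarith

end Legendre

lemma integral_sq_pos_of_integral_mul_ne_zero {X : Type*} [MeasurableSpace X] {μ : Measure X}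
    {f u : X → ℝ} (hu : Integrable (fun x => u x ^ 2) μ) (hfu : ∫ x, f x * u x ∂μ ≠ 0) :
    0 < ∫ x, u x ^ 2 ∂μ := by
  refine (integral_nonneg fun x => sq_nonneg (u x)).lt_of_ne fun h => hfu ?_
  have hu0 : u =ᵐ[μ] 0 := by
    filter_upwards [(integral_eq_zero_iff_of_nonneg (fun x => sq_nonneg (u x)) hu).1 h.symm]
      with x hx
    exact pow_eq_zero_iff two_ne_zero |>.1 hx
  refine integral_eq_zero_of_ae ?_
  filter_upwards [hu0] with x hx
  simp [hx]

theorem stmt_19_general {X : Type*} [MeasurableSpace X] (μ : Measure X)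
    (g G Ghat : ℝ → ℝ) (Λ1 ε : ℝ) (hε : 0 < ε)
    (hg : ContDiff ℝ 1 g)
    (hg' : ∀ s : ℝ, 0 ≤ deriv g s ∧ deriv g s ≤ Λ1 - ε)
    (hG : ∀ s : ℝ, HasDerivAt G (g s) s)
    (hGhat : ∀ s : ℝ, IsLUB {y : ℝ | ∃ τ : ℝ, y = s * τ - G τ} (Ghat s))
    (T : (X → ℝ) → (X → ℝ))
    (hTpos : ∀ f : X → ℝ, ¬ f =ᵐ[μ] 0 → 0 < ∫ x, f x * T f x ∂μ)
    (hgap : ∀ f : X → ℝ, Λ1 * (∫ x, (T f x) ^ 2 ∂μ) ≤ ∫ x, f x * T f x ∂μ)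
    (ω ψ ρ : X → ℝ)
    (hωψ : ∀ᵐ x ∂μ, ω x = g (ψ x))
    (hρ : ¬ ρ =ᵐ[μ] 0)
    (hint1 : Integrable (fun x => (T ρ x) ^ 2) μ)
    (hint2 : Integrable (fun x => ρ x * T ρ x) μ)
    (hint3 : Integrable (fun x => ψ x * ρ x) μ)
    (hint4 : Integrable (fun x => Ghat (ω x + ρ x)) μ)
    (hint5 : Integrable (fun x => Ghat (ω x)) μ)
    (hGconst : (∫ x, Ghat (ω x + ρ x) ∂μ) = ∫ x, Ghat (ω x) ∂μ) :
    (ε / 2) * (∫ x, (T ρ x) ^ 2 ∂μ) ≤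
      -(1 / 2) * (∫ x, ρ x * T ρ x ∂μ) - (∫ x, ψ x * ρ x ∂μ) ∧
    0 < (ε / 2) * (∫ x, (T ρ x) ^ 2 ∂μ) := by
  have hg_diff : Differentiable ℝ g := hg.differentiable one_ne_zero
  have hpointwise : (fun x => ψ x * ρ x + ρ x * T ρ x - (Λ1 - ε) / 2 * T ρ x ^ 2)
      ≤ᵐ[μ] fun x => Ghat (ω x + ρ x) - Ghat (ω x) := by
    filter_upwards [hωψ] with x hx
    rw [hx]
    exact mul_add_mul_sub_sq_le_legendre_sub_legendre hG hGhat
      (monotone_of_deriv_nonneg hg_diff fun s => (hg' s).1)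
      (monotone_mul_sub_of_deriv_le hg_diff fun s => (hg' s).2) _ _ _
  have henergy : (∫ x, ψ x * ρ x ∂μ) + (∫ x, ρ x * T ρ x ∂μ)
      - (Λ1 - ε) / 2 * (∫ x, T ρ x ^ 2 ∂μ) ≤ 0 := by
    have hsum : Integrable (fun x => ψ x * ρ x + ρ x * T ρ x) μ := hint3.add hint2
    have := integral_mono_ae (hsum.sub (hint1.const_mul _)) (hint4.sub hint5) hpointwise
    simp only [Pi.sub_apply] at this
    rwa [integral_sub hint4 hint5, hGconst, sub_self, integral_sub hsum (hint1.const_mul _),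
      integral_add hint3 hint2, integral_const_mul] at this
  have hTρ : 0 < ∫ x, T ρ x ^ 2 ∂μ :=
    integral_sq_pos_of_integral_mul_ne_zero hint1 (hTpos ρ hρ).ne'
  exact ⟨by linarith [hgap ρ], by positivity⟩

/-- Abstract form of the key energy estimate in the proof of Arnold's second
stability theorem: if 0 ≤ g' ≤ Λ₁ − ε, ω = g(ψ), ψ = Tω + h with T a symmetric
positive operator satisfying the spectral-gap inequality
Λ₁∫(Tρ)² ≤ ∫ρ·Tρ, and ρ ≠ 0 satisfies ∫Ĝ(ω+ρ) = ∫Ĝ(ω) (Ĝ the Legendre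
transform of the antiderivative G of g), then
−(1/2)∫ρ·Tρ − ∫ψ·ρ ≥ (ε/2)∫(Tρ)² > 0. -/
theorem stmt_19 {X : Type*} [MeasurableSpace X] (μ : Measure X)
    (g G Ghat : ℝ → ℝ) (Λ1 ε : ℝ) (hε : 0 < ε)
    (hg : ContDiff ℝ 1 g)
    (hg' : ∀ s : ℝ, 0 ≤ deriv g s ∧ deriv g s ≤ Λ1 - ε)
    (hG : ∀ s : ℝ, HasDerivAt G (g s) s)
    (hGhat : ∀ s : ℝ, IsLUB {y : ℝ | ∃ τ : ℝ, y = s * τ - G τ} (Ghat s))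
    (T : (X → ℝ) → (X → ℝ))
    (hTadd : ∀ f₁ f₂ : X → ℝ, T (fun x => f₁ x + f₂ x) = fun x => T f₁ x + T f₂ x)
    (hTsmul : ∀ (c : ℝ) (f : X → ℝ), T (fun x => c * f x) = fun x => c * T f x)
    (hTsym : ∀ f₁ f₂ : X → ℝ, (∫ x, T f₁ x * f₂ x ∂μ) = ∫ x, f₁ x * T f₂ x ∂μ)
    (hTpos : ∀ f : X → ℝ, ¬ f =ᵐ[μ] 0 → 0 < ∫ x, f x * T f x ∂μ)
    (hgap : ∀ f : X → ℝ, Λ1 * (∫ x, (T f x) ^ 2 ∂μ) ≤ ∫ x, f x * T f x ∂μ)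
    (ω ψ ρ h : X → ℝ)
    (hωψ : ∀ᵐ x ∂μ, ω x = g (ψ x))
    (hψ : ψ = fun x => T ω x + h x)
    (hρ : ¬ ρ =ᵐ[μ] 0)
    (hint1 : Integrable (fun x => (T ρ x) ^ 2) μ)
    (hint2 : Integrable (fun x => ρ x * T ρ x) μ)
    (hint3 : Integrable (fun x => ψ x * ρ x) μ)
    (hint4 : Integrable (fun x => Ghat (ω x + ρ x)) μ)
    (hint5 : Integrable (fun x => Ghat (ω x)) μ)
    (hGconst : (∫ x, Ghat (ω x + ρ x) ∂μ) = ∫ x, Ghat (ω x) ∂μ) :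
    (ε / 2) * (∫ x, (T ρ x) ^ 2 ∂μ) ≤
      -(1 / 2) * (∫ x, ρ x * T ρ x ∂μ) - (∫ x, ψ x * ρ x ∂μ) ∧
    0 < (ε / 2) * (∫ x, (T ρ x) ^ 2 ∂μ) :=
  stmt_19_general μ g G Ghat Λ1 ε hε hg hg' hG hGhat T hTpos hgap ω ψ ρ hωψ hρ hint1 hint2 hint3
    hint4 hint5 hGconst
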